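/- arXiv:2504.10743 — 3 statements merged into one kernel-verified Lean document; each statement's English description precedes it below -/
import Mathlib

section
/- α-close distributions that are not related by a combined shift: For every α > 1, let 𝒟 be the point mass at 1, and let 𝒟' be the distribution of P' where P' = 1/α² with probability 1 − 1/α and P' = 1 with probability 1/α. Then the pair (𝒟, 𝒟') is α-close; moreover, 1/α² < 1/α, so 𝒟' has an atom at a point lying outside the interval [s/α, α·s] for every support point s of 𝒟 (the only support point of 𝒟 being s = 1), and hence 𝒟' cannot be obtained from 𝒟 by a combined shift with parameter α. -/
open MeasureTheory

/-- The (real-valued) tail probability `ℙ_{P ~ μ}(P > x)` of a distribution `μ` on `ℝ`. -/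
noncomputable def tailProb (μ : Measure ℝ) (x : ℝ) : ℝ := (μ (Set.Ioi x)).toReal

/-- A pair of distributions `(μ, μ')` on the nonnegative reals is `α`-close if for all `x ≥ 0`,
`(1/α)·ℙ(P > α·x) ≤ ℙ(P' > x) ≤ α·ℙ(P > x/α)`. -/
def AlphaClose (α : ℝ) (μ μ' : Measure ℝ) : Prop :=
  ∀ x : ℝ, 0 ≤ x →
    (1 / α) * tailProb μ (α * x) ≤ tailProb μ' x ∧ tailProb μ' x ≤ α * tailProb μ (x / α)

/-!
The tail of `δ₁` at `y` is the indicator of `y < 1`, so `α`-closeness to `δ₁` only asks that the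
tail of `𝒟'` be at least `1/α` on `[0, 1/α)` and vanish on `[α, ∞)`. The atom of mass `1/α` at `1`
takes care of both, which leaves the remaining mass `1 - 1/α` free to sit at `1/α²`, below the
window `[1/α, α]` around the support point `1`.
-/

lemma tailProb_dirac (a x : ℝ) : tailProb (Measure.dirac a) x = if x < a then 1 else 0 := by
  simp only [tailProb, Measure.dirac_apply, Set.indicator, Set.mem_Ioi]
  split <;> simp

lemma tailProb_le_one (μ : Measure ℝ) [IsZeroOrProbabilityMeasure μ] (x : ℝ) :
    tailProb μ x ≤ 1 :=
  ENNReal.toReal_le_of_le_ofReal zero_le_one (by simpa using prob_le_one)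

lemma tailProb_smul_dirac_add_smul_dirac {c d : ℝ} (hc : 0 ≤ c) (hd : 0 ≤ d) (a b x : ℝ) :
    tailProb (ENNReal.ofReal c • Measure.dirac a + ENNReal.ofReal d • Measure.dirac b) x
      = c * (if x < a then 1 else 0) + d * (if x < b then 1 else 0) := by
  simp only [tailProb, Measure.add_apply, Measure.smul_apply, smul_eq_mul,
    Measure.dirac_apply, Set.indicator, Set.mem_Ioi]
  rw [ENNReal.toReal_add (by split <;> simp) (by split <;> simp)]
  split <;> split <;> simp [ENNReal.toReal_ofReal, hc, hd]

lemma isProbabilityMeasure_smul_dirac_add_smul_dirac {c : ℝ} (hc₀ : 0 ≤ c) (hc₁ : c ≤ 1)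
    (a b : ℝ) :
    IsProbabilityMeasure
      (ENNReal.ofReal (1 - c) • Measure.dirac a + ENNReal.ofReal c • Measure.dirac b) := by
  constructor
  simp only [Measure.add_apply, Measure.smul_apply, measure_univ, smul_eq_mul, mul_one]
  rw [← ENNReal.ofReal_add (by linarith) hc₀]
  simp

lemma alphaClose_dirac_one {α : ℝ} (hα : 1 ≤ α) (μ' : Measure ℝ) [IsProbabilityMeasure μ']
    (h_lower : ∀ x < 1 / α, 1 / α ≤ tailProb μ' x)
    (h_upper : ∀ x, α ≤ x → tailProb μ' x = 0) :
    AlphaClose α (Measure.dirac 1) μ' := by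
  have hα₀ : 0 < α := by linarith
  intro x hx
  rw [tailProb_dirac, tailProb_dirac]
  constructor
  · split_ifs with hαx
    · have : x < 1 / α := by rw [lt_div_iff₀ hα₀]; linarith
      simpa using h_lower x this
    · simp [tailProb, ENNReal.toReal_nonneg]
  · split_ifs with hxα
    · simpa using (tailProb_le_one μ' x).trans hα
    · have : α ≤ x := by rw [div_lt_one hα₀] at hxα; linarith
      simp [h_upper x this]

/-- For every `α > 1`, the point mass `𝒟` at `1` and the distribution `𝒟'` taking value
`1/α²` with probability `1 - 1/α` and value `1` with probability `1/α` are α-close;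
moreover `1/α² < 1/α`, and `𝒟'` has an atom at `1/α²`, which lies outside the interval
`[s/α, α·s]` for the only support point `s = 1` of `𝒟` — hence `𝒟'` cannot be obtained
from `𝒟` by a combined shift with parameter `α`. -/
theorem alphaClose_not_combinedShift (α : ℝ) (hα : 1 < α) :
    AlphaClose α (Measure.dirac (1 : ℝ))
      (ENNReal.ofReal (1 - 1 / α) • Measure.dirac (1 / α ^ 2)
        + ENNReal.ofReal (1 / α) • Measure.dirac (1 : ℝ)) ∧
    1 / α ^ 2 < 1 / α ∧
    (ENNReal.ofReal (1 - 1 / α) • Measure.dirac (1 / α ^ 2)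
        + ENNReal.ofReal (1 / α) • Measure.dirac (1 : ℝ) : Measure ℝ) {1 / α ^ 2} ≠ 0 ∧
    1 / α ^ 2 ∉ Set.Icc (1 / α) (α * 1) := by
  have hα₀ : 0 < α := by linarith
  have hinv_lt_one : 1 / α < 1 := (div_lt_one hα₀).2 hα
  have hinv_pos : 0 < 1 / α := by positivity
  have hsq_lt : 1 / α ^ 2 < 1 / α := one_div_lt_one_div_of_lt hα₀ (by nlinarith)
  have hweight : 0 ≤ 1 - 1 / α := by linarith
  have hprob := isProbabilityMeasure_smul_dirac_add_smul_dirac hinv_pos.le hinv_lt_one.le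
    (1 / α ^ 2) 1
  refine ⟨alphaClose_dirac_one hα.le _ (fun x hx => ?_) (fun x hx => ?_), hsq_lt, ?_,
    fun h => h.1.not_gt hsq_lt⟩
  · rw [tailProb_smul_dirac_add_smul_dirac hweight hinv_pos.le,
      if_pos (hx.trans hinv_lt_one)]
    split_ifs <;> linarith
  · have hx₁ : ¬x < 1 := by linarith
    have hx₂ : ¬x < 1 / α ^ 2 := by linarith
    rw [tailProb_smul_dirac_add_smul_dirac hweight hinv_pos.le, if_neg hx₁, if_neg hx₂]
    ring
  · refine (lt_of_lt_of_le ?_ le_self_add).ne'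
    simpa using inv_lt_one_of_one_lt₀ hα
end

section
/- Key investment inequality for α-close distributions: Let α ≥ 1 and let (𝒟*, 𝒟̂) be an α-close pair of probability distributions on the nonnegative reals, with P* ~ 𝒟* and P̂ ~ 𝒟̂. Then for all y, q ≥ 0: E[min{P̂ − y, q}·𝟙{P̂ > y}] ≥ (1/α²)·E[min{P* − α·y, α·q}·𝟙{P* > α·y}]. -/
open MeasureTheory

/-!
Both sides are layer-cake integrals: `E[min (P - y) q · 𝟙{P > y}] = ∫₀^q ℙ(P > y + t) dt`.
The substitution `s = α t` turns the left-hand side into `∫₀^q α⁻¹ ℙ(P* > α (y + t)) dt`,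
and the lower bound of α-closeness compares the two integrands pointwise.
-/

lemma tailProb_antitone (μ : Measure ℝ) [IsFiniteMeasure μ] : Antitone (tailProb μ) :=
  fun _ _ hab => measureReal_mono (Set.Ioi_subset_Ioi hab)

lemma lt_indicator_Ioi_min_sub_iff {y q t a : ℝ} (ht : 0 < t) :
    t < Set.indicator (Set.Ioi y) (fun x => min (x - y) q) a ↔ y + t < a ∧ t < q := by
  by_cases ha : a ∈ Set.Ioi y
  · rw [Set.indicator_of_mem ha, lt_min_iff, lt_sub_iff_add_lt']
  · rw [Set.indicator_of_notMem ha]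
    simp only [Set.mem_Ioi, not_lt] at ha
    constructor
    · intro h; linarith
    · rintro ⟨h, -⟩; linarith

theorem integral_indicator_Ioi_min_sub (μ : Measure ℝ) [IsFiniteMeasure μ] (y : ℝ) {q : ℝ}
    (hq : 0 ≤ q) :
    ∫ x, Set.indicator (Set.Ioi y) (fun x => min (x - y) q) x ∂μ
      = ∫ t in (0)..q, tailProb μ (y + t) := by
  set f := Set.indicator (Set.Ioi y) (fun x => min (x - y) q)
  have hf_nonneg : 0 ≤ f := Set.indicator_nonneg fun x hx => le_min (sub_nonneg.2 hx.le) hq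
  have hf_le : ∀ x, f x ≤ q := fun x => Set.indicator_le' (fun _ _ => min_le_right _ _)
    (fun _ _ => hq) x
  have hf_int : Integrable f μ := by
    refine .of_bound (((measurable_id.sub_const y).min measurable_const).indicator
      measurableSet_Ioi).aestronglyMeasurable q (.of_forall fun x => ?_)
    rw [Real.norm_of_nonneg (hf_nonneg x)]
    exact hf_le x
  have hlevel : ∀ t ∈ Set.Ioi (0 : ℝ),
      μ.real {a | t < f a} = (Set.Iio q).indicator (fun t => tailProb μ (y + t)) t := by
    intro t ht
    simp only [f, lt_indicator_Ioi_min_sub_iff (Set.mem_Ioi.1 ht)]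
    by_cases htq : t < q
    · simp [htq, tailProb, measureReal_def, Set.Ioi]
    · simp [htq]
  rw [hf_int.integral_eq_integral_meas_lt (.of_forall hf_nonneg),
    setIntegral_congr_fun measurableSet_Ioi hlevel, setIntegral_indicator measurableSet_Iio,
    Set.Ioi_inter_Iio, ← integral_Ioc_eq_integral_Ioo, intervalIntegral.integral_of_le hq]

theorem investment_inequality_general (α : ℝ) (hα : 1 ≤ α) (μs μh : Measure ℝ)
    [IsProbabilityMeasure μs] [IsProbabilityMeasure μh]
    (hclose : AlphaClose α μs μh) (y q : ℝ) (hy : 0 ≤ y) (hq : 0 ≤ q) :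
    (1 / α ^ 2) * ∫ x, Set.indicator (Set.Ioi (α * y)) (fun x => min (x - α * y) (α * q)) x ∂μs
      ≤ ∫ x, Set.indicator (Set.Ioi y) (fun x => min (x - y) q) x ∂μh := by
  have hα0 : 0 < α := by linarith
  have hscale : (1 / α ^ 2) * ∫ t in (0)..α * q, tailProb μs (α * y + t)
      = ∫ t in (0)..q, α⁻¹ * tailProb μs (α * (y + t)) := by
    have hsubst := intervalIntegral.integral_comp_mul_left (fun s => tailProb μs (α * y + s))
      (a := 0) (b := q) hα0.ne'
    simp only [mul_zero, smul_eq_mul, ← mul_add] at hsubst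
    rw [intervalIntegral.integral_const_mul, hsubst]
    field_simp
  have hint_s : IntervalIntegrable (fun t => α⁻¹ * tailProb μs (α * (y + t))) volume 0 q :=
    (((tailProb_antitone μs).comp_monotone fun _ _ h => by gcongr).const_mul
      (inv_nonneg.2 hα0.le)).intervalIntegrable
  have hint_h : IntervalIntegrable (fun t => tailProb μh (y + t)) volume 0 q :=
    ((tailProb_antitone μh).comp_monotone fun _ _ h => by gcongr).intervalIntegrable
  rw [integral_indicator_Ioi_min_sub μs _ (by positivity), integral_indicator_Ioi_min_sub μh _ hq,
    hscale]
  refine intervalIntegral.integral_mono_on hq hint_s hint_h fun t ht => ?_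
  simpa only [one_div] using (hclose (y + t) (by linarith [ht.1])).1

/-- Key investment inequality for α-close distributions: if `(𝒟*, 𝒟̂)` is α-close,
with `P* ~ 𝒟*` and `P̂ ~ 𝒟̂`, then for all `y, q ≥ 0`,
`E[min{P̂ − y, q}·𝟙{P̂ > y}] ≥ (1/α²)·E[min{P* − α·y, α·q}·𝟙{P* > α·y}]`. -/
theorem investment_inequality (α : ℝ) (hα : 1 ≤ α) (μs μh : Measure ℝ)
    [IsProbabilityMeasure μs] [IsProbabilityMeasure μh]
    (hμs : μs (Set.Iio 0) = 0) (hμh : μh (Set.Iio 0) = 0)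
    (hclose : AlphaClose α μs μh) (y q : ℝ) (hy : 0 ≤ y) (hq : 0 ≤ q) :
    (1 / α ^ 2) * ∫ x, Set.indicator (Set.Ioi (α * y)) (fun x => min (x - α * y) (α * q)) x ∂μs
      ≤ ∫ x, Set.indicator (Set.Ioi y) (fun x => min (x - y) q) x ∂μh :=
  investment_inequality_general α hα μs μh hclose y q hy hq
end

section
/- The Gittins rank is maximized at a quantum ending at a support point: Let 𝒟 be a probability distribution on the nonnegative reals with finite support, let P ~ 𝒟, and let y ≥ 0 satisfy ℙ(P > y) > 0. For q > 0 define the rank R(q) = ℙ(y < P ≤ y + q) / E[min{P − y, q}·𝟙{P > y}] (the denominator is positive for q > 0 since ℙ(P > y) > 0). Then there exists q* > 0 such that y + q* is a support point of 𝒟 and R(q*) ≥ R(q) for all q > 0. -/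
/-!
Since the measure is carried by finitely many atoms, for any `q > 0` the completion probability
`ℙ(y < P ≤ y + q)` is unchanged when `q` is shrunk to `s - y`, where `s` is the largest atom in
`(y, y + q]`, while the expected work `E[min{P - y, q}·𝟙{P > y}]` can only decrease. So every
rank is dominated by the rank at some atom above `y` (or vanishes), and the best of these finitely
many atoms is a maximiser.
-/

open MeasureTheory Set

theorem exists_mem_measure_singleton_ne_zero {α : Type*} [MeasurableSpace α] {μ : Measure α}
    {S : Finset α} (hS : μ (↑S)ᶜ = 0) {A : Set α} (hA : μ A ≠ 0) :
    ∃ s ∈ S, s ∈ A ∧ μ {s} ≠ 0 := by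
  by_contra! h
  have hAS : μ (A ∩ ↑S) = 0 :=
    (measure_null_iff_singleton (S.countable_toSet.mono inter_subset_right)).2
      fun s hs => h s hs.2 hs.1
  refine hA (measure_mono_null (fun x hx => ?_) (measure_union_null hAS hS))
  by_cases hx' : x ∈ (S : Set α)
  exacts [Or.inl ⟨hx, hx'⟩, Or.inr hx']

noncomputable def gittinsRank (μ : Measure ℝ) (y q : ℝ) : ℝ :=
  (μ (Ioc y (y + q))).toReal / ∫ x, (Ioi y).indicator (fun x => min (x - y) q) x ∂μ

section GittinsRank

variable {μ : Measure ℝ} {y : ℝ}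

theorem integrable_indicator_min_sub [IsFiniteMeasure μ] {q : ℝ} (hq : 0 ≤ q) :
    Integrable ((Ioi y).indicator fun x => min (x - y) q) μ := by
  refine Integrable.of_bound (by fun_prop (disch := measurability)) q (ae_of_all _ fun x => ?_)
  by_cases hx : x ∈ Ioi y
  · rw [indicator_of_mem hx, Real.norm_of_nonneg (le_min (sub_nonneg.2 (le_of_lt hx)) hq)]
    exact min_le_right _ _
  · rwa [indicator_of_notMem hx, norm_zero]

theorem indicator_min_sub_nonneg {q : ℝ} (hq : 0 ≤ q) :
    0 ≤ (Ioi y).indicator fun x => min (x - y) q :=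
  indicator_nonneg fun _ hx => le_min (sub_nonneg.2 (le_of_lt hx)) hq

theorem integral_indicator_min_sub_nonneg {q : ℝ} (hq : 0 ≤ q) :
    0 ≤ ∫ x, (Ioi y).indicator (fun x => min (x - y) q) x ∂μ :=
  integral_nonneg (indicator_min_sub_nonneg hq)

theorem integral_indicator_min_sub_mono [IsFiniteMeasure μ] {q q' : ℝ} (hq : 0 ≤ q)
    (hqq' : q ≤ q') :
    ∫ x, (Ioi y).indicator (fun x => min (x - y) q) x ∂μ ≤
      ∫ x, (Ioi y).indicator (fun x => min (x - y) q') x ∂μ :=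
  integral_mono (integrable_indicator_min_sub hq) (integrable_indicator_min_sub (hq.trans hqq'))
    fun _ => indicator_le_indicator (min_le_min le_rfl hqq')

theorem integral_indicator_min_sub_pos [IsFiniteMeasure μ] {q s : ℝ} (hq : 0 < q) (hys : y < s)
    (hs : μ {s} ≠ 0) :
    0 < ∫ x, (Ioi y).indicator (fun x => min (x - y) q) x ∂μ := by
  rw [integral_pos_iff_support_of_nonneg (indicator_min_sub_nonneg hq.le)
    (integrable_indicator_min_sub hq.le)]
  refine (pos_iff_ne_zero.2 hs).trans_le (measure_mono (singleton_subset_iff.2 ?_))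
  rw [Function.mem_support, indicator_of_mem (show s ∈ Ioi y from hys)]
  exact (lt_min (sub_pos.2 hys) hq).ne'

theorem gittinsRank_nonneg {q : ℝ} (hq : 0 ≤ q) : 0 ≤ gittinsRank μ y q :=
  div_nonneg ENNReal.toReal_nonneg (integral_indicator_min_sub_nonneg hq)

theorem gittinsRank_le_of_measure_Ioc_eq_zero [IsFiniteMeasure μ] {r q : ℝ} (hr : 0 < r)
    (hrq : r ≤ q) (hatom : μ {y + r} ≠ 0) (hnull : μ (Ioc (y + r) (y + q)) = 0) :
    gittinsRank μ y q ≤ gittinsRank μ y r := by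
  have hprob : μ (Ioc y (y + q)) = μ (Ioc y (y + r)) := by
    rw [← Ioc_union_Ioc_eq_Ioc (by linarith : y ≤ y + r) (by linarith : y + r ≤ y + q)]
    exact le_antisymm ((measure_union_le _ _).trans (by rw [hnull, add_zero]))
      (measure_mono subset_union_left)
  unfold gittinsRank
  rw [hprob]
  exact div_le_div_of_nonneg_left ENNReal.toReal_nonneg
    (integral_indicator_min_sub_pos hr (by linarith) hatom)
    (integral_indicator_min_sub_mono hr.le hrq)

theorem exists_atom_gittinsRank_le [IsFiniteMeasure μ] {S : Finset ℝ} (hS : μ (↑S)ᶜ = 0)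
    {q : ℝ} (hpos : μ (Ioc y (y + q)) ≠ 0) :
    ∃ s ∈ S, y < s ∧ μ {s} ≠ 0 ∧ gittinsRank μ y q ≤ gittinsRank μ y (s - y) := by
  classical
  set T := S.filter fun s => s ∈ Ioc y (y + q) ∧ μ {s} ≠ 0
  obtain ⟨s₀, hs₀S, hs₀, hs₀μ⟩ := exists_mem_measure_singleton_ne_zero hS hpos
  have hT : T.Nonempty := ⟨s₀, Finset.mem_filter.2 ⟨hs₀S, hs₀, hs₀μ⟩⟩
  obtain ⟨hsS, hs, hsμ⟩ := Finset.mem_filter.1 (T.max'_mem hT)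
  set s := T.max' hT
  have hnull : μ (Ioc (y + (s - y)) (y + q)) = 0 := by
    by_contra h
    obtain ⟨t, htS, ⟨hst, htq⟩, htμ⟩ := exists_mem_measure_singleton_ne_zero hS h
    rw [add_sub_cancel] at hst
    exact hst.not_ge (T.le_max' t (Finset.mem_filter.2 ⟨htS, ⟨hs.1.trans hst, htq⟩, htμ⟩))
  refine ⟨s, hsS, hs.1, hsμ, gittinsRank_le_of_measure_Ioc_eq_zero (by linarith [hs.1])
    (by linarith [hs.2]) (by rwa [add_sub_cancel]) hnull⟩

end GittinsRank

theorem rank_max_at_support_point_general (μ : Measure ℝ) [IsProbabilityMeasure μ]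
    (hfin : ∃ S : Finset ℝ, μ ((↑S : Set ℝ)ᶜ) = 0)
    (y : ℝ) (hty : 0 < (μ (Set.Ioi y)).toReal) :
    ∃ qs : ℝ, 0 < qs ∧ μ {y + qs} ≠ 0 ∧
      ∀ q : ℝ, 0 < q →
        (μ (Set.Ioc y (y + q))).toReal
            / ∫ x, Set.indicator (Set.Ioi y) (fun x => min (x - y) q) x ∂μ ≤
          (μ (Set.Ioc y (y + qs))).toReal
            / ∫ x, Set.indicator (Set.Ioi y) (fun x => min (x - y) qs) x ∂μ := by
  classical
  obtain ⟨S, hS⟩ := hfin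
  set T := S.filter fun s => y < s ∧ μ {s} ≠ 0
  have hT : T.Nonempty := by
    obtain ⟨s, hsS, hs, hsμ⟩ :=
      exists_mem_measure_singleton_ne_zero hS (ENNReal.toReal_pos_iff.1 hty).1.ne'
    exact ⟨s, Finset.mem_filter.2 ⟨hsS, hs, hsμ⟩⟩
  obtain ⟨m, hmT, hmax⟩ := T.exists_max_image (fun s => gittinsRank μ y (s - y)) hT
  obtain ⟨-, hym, hmμ⟩ := Finset.mem_filter.1 hmT
  refine ⟨m - y, sub_pos.2 hym, by rwa [add_sub_cancel], fun q _ => ?_⟩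
  change gittinsRank μ y q ≤ gittinsRank μ y (m - y)
  by_cases hpos : μ (Ioc y (y + q)) = 0
  · rw [gittinsRank, hpos, ENNReal.toReal_zero, zero_div]
    exact gittinsRank_nonneg (sub_pos.2 hym).le
  obtain ⟨s, hsS, hys, hsμ, hle⟩ := exists_atom_gittinsRank_le hS hpos
  exact hle.trans (hmax s (Finset.mem_filter.2 ⟨hsS, hys, hsμ⟩))

/-- The Gittins rank is maximized at a quantum ending at a support point: let `μ` be a
finitely supported distribution on the nonnegative reals, `y ≥ 0` with `ℙ(P > y) > 0`,
and for `q > 0` let the rank be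
`R(q) = ℙ(y < P ≤ y + q) / E[min{P − y, q}·𝟙{P > y}]`. Then there is `q* > 0` such that
`y + q*` is a support point of `μ` (an atom of positive mass) and `R(q*) ≥ R(q)` for
every `q > 0`. -/
theorem rank_max_at_support_point (μ : Measure ℝ) [IsProbabilityMeasure μ]
    (hnn : μ (Set.Iio 0) = 0)
    (hfin : ∃ S : Finset ℝ, μ ((↑S : Set ℝ)ᶜ) = 0)
    (y : ℝ) (hy : 0 ≤ y) (hty : 0 < (μ (Set.Ioi y)).toReal) :
    ∃ qs : ℝ, 0 < qs ∧ μ {y + qs} ≠ 0 ∧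
      ∀ q : ℝ, 0 < q →
        (μ (Set.Ioc y (y + q))).toReal
            / ∫ x, Set.indicator (Set.Ioi y) (fun x => min (x - y) q) x ∂μ ≤
          (μ (Set.Ioc y (y + qs))).toReal
            / ∫ x, Set.indicator (Set.Ioi y) (fun x => min (x - y) qs) x ∂μ :=
  rank_max_at_support_point_general μ hfin y hty
end
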